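/- If an axiom system 𝒜 proves both ⟨T ∈ D⟩ and the surprise formula σ^𝒜, then 𝒜 is inconsistent. -/

import Mathlib

open scoped Classical

/-- Propositional formulas over the six variables `Y_r`, `r ∈ R = Fin 6`
(`0 = Mo, 1 = Tu, 2 = We, 3 = Th, 4 = Fr, 5 = none`). -/
inductive Form : Type where
  | bot : Form
  | var : Fin 6 → Form
  | imp : Form → Form → Form
deriving DecidableEq

def Form.neg (φ : Form) : Form := φ.imp .bot
def Form.top : Form := Form.neg .bot
def Form.or (φ ψ : Form) : Form := φ.neg.imp ψ
def Form.and (φ ψ : Form) : Form := (φ.imp ψ.neg).neg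

/-- Evaluation in the model `r ∈ R`: variable `Y_i` is true iff `i = r`. -/
def Form.eval (r : Fin 6) : Form → Bool
  | .bot => false
  | .var i => decide (i = r)
  | .imp φ ψ => !(Form.eval r φ) || Form.eval r ψ

/-- `r ⊨ φ`. -/
def Sat (r : Fin 6) (φ : Form) : Prop := Form.eval r φ = true

def bigOr (l : List Form) : Form := l.foldr Form.or .bot
def bigAnd (l : List Form) : Form := l.foldr Form.and Form.top

/-- `χ_B = ⋁_{r ∈ B} Y_r`. -/
def chi (B : Finset (Fin 6)) : Form := bigOr ((B.sort (· ≤ ·)).map Form.var)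

/-- The axiom `(Ax_{=1})`: exactly one of the variables `Y_r` is true. -/
def Ax1 : Form :=
  (chi Finset.univ).and
    (bigAnd ((List.finRange 6).flatMap (fun i =>
      (List.finRange 6).map (fun j =>
        if i = j then Form.top else ((Form.var i).neg).or ((Form.var j).neg)))))

/-- Provability from the axiom system `A` (by soundness and completeness of
propositional logic, semantic consequence over the six models). -/
def Proves (A : Set Form) (φ : Form) : Prop :=
  ∀ r : Fin 6, (∀ ψ ∈ A, Sat r ψ) → Sat r φ

/-- `K` is an `A`-p-knowledge set: `A ⊢ ⟨T ∈ K⟩`. -/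
def KSet (A : Set Form) (K : Finset (Fin 6)) : Prop := Proves A (chi K)

/-- `K_A`, the intersection of all `A`-p-knowledge sets. -/
noncomputable def KA (A : Set Form) : Finset (Fin 6) :=
  Finset.univ.filter (fun r => ∀ K : Finset (Fin 6), KSet A K → r ∈ K)

/-- The days `D = {Mo,…,Fr}`. -/
def DaysF : Finset (Fin 6) := {0, 1, 2, 3, 4}

/-- `⟨T ≤ d⟩`. -/
def TLe (d : Fin 6) : Form := chi (Finset.univ.filter (· ≤ d))
/-- `⟨T ≥ d⟩`. -/
def TGe (d : Fin 6) : Form := chi (Finset.univ.filter (d ≤ ·))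
/-- `⟨T = d⟩`. -/
def TEq (d : Fin 6) : Form := Form.var d

/-- Equivalence of axiom systems: mutual provability. -/
def EquivAx (A₁ A₂ : Set Form) : Prop :=
  (∀ φ ∈ A₂, Proves A₁ φ) ∧ (∀ φ ∈ A₁, Proves A₂ φ)

/-- Iverson bracket: `⊤` if `P` holds, else `⊥`. -/
noncomputable def iver (P : Prop) : Form := if P then Form.top else Form.bot

/-- The maximum of `K` (with default `Mo` for `K = ∅`). -/
def maxD (K : Finset (Fin 6)) : Fin 6 := (K.max).getD 0

/-- `K ∖ {max K}` (with `∅ ∖ {max ∅} = ∅`). -/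
def erasemax (K : Finset (Fin 6)) : Finset (Fin 6) := K.erase (maxD K)

/-- `σ^A := ⋀_{K ⊆ R} ([K_A ⊆ K] → χ_{K∖{max K}})`. -/
noncomputable def sigmaA (A : Set Form) : Form :=
  bigAnd (((Finset.univ : Finset (Finset (Fin 6))).toList).map
    (fun K => (iver (KA A ⊆ K)).imp (chi (erasemax K))))

/-- The set of `A`-p-surprising days. -/
def Dsurpr (A : Set Form) : Set (Fin 6) :=
  {d | d ∈ DaysF ∧ d ∈ KA A ∧ ¬ Proves A (TLe d)}

/-- `A` is inconsistent iff it proves every formula. -/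
def Inconsistent (A : Set Form) : Prop := ∀ φ, Proves A φ

/-- `τ^A := ⋁_{d ∈ D} ⋀_{K ⊆ R} ([A ⊢ χ_K] → [d ∈ K∖{max K}])`. -/
noncomputable def tauA (A : Set Form) : Form :=
  bigOr ((DaysF.sort (· ≤ ·)).map (fun d =>
    bigAnd (((Finset.univ : Finset (Finset (Fin 6))).toList).map
      (fun K => (iver (Proves A (chi K))).imp (iver (d ∈ erasemax K))))))

/-- The axiom system `𝒜_L = {(Ax_{=1}), χ_L}`. -/
def AL (L : Finset (Fin 6)) : Set Form := {Ax1, chi L}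

/-!
Put `K = K_𝒜` into the surprise formula: its premise `[K_𝒜 ⊆ K_𝒜]` is `⊤`, so `𝒜` proves
`χ_{K_𝒜 ∖ {max K_𝒜}}`. Then `K_𝒜 ∖ {max K_𝒜}` is a knowledge set, hence contains `K_𝒜`,
which forces `K_𝒜 = ∅`. But every model of `𝒜` lies in `K_𝒜`, so `𝒜` has no model.
-/

lemma sat_and (r : Fin 6) (φ ψ : Form) : Sat r (φ.and ψ) ↔ Sat r φ ∧ Sat r ψ := by
  simp [Sat, Form.and, Form.neg, Form.eval]

lemma sat_or (r : Fin 6) (φ ψ : Form) : Sat r (φ.or ψ) ↔ Sat r φ ∨ Sat r ψ := by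
  simp [Sat, Form.or, Form.neg, Form.eval]

lemma sat_top (r : Fin 6) : Sat r Form.top := rfl

lemma sat_imp_top (r : Fin 6) (φ : Form) : Sat r (Form.top.imp φ) ↔ Sat r φ := by
  have : Form.eval r Form.top = true := sat_top r
  simp [Sat, Form.eval, this]

lemma sat_bigAnd (r : Fin 6) (l : List Form) : Sat r (bigAnd l) ↔ ∀ φ ∈ l, Sat r φ := by
  induction l with
  | nil => simpa [bigAnd] using sat_top r
  | cons a t ih => simp only [bigAnd, List.foldr_cons] at *; simp [sat_and, ih]

lemma sat_bigOr (r : Fin 6) (l : List Form) : Sat r (bigOr l) ↔ ∃ φ ∈ l, Sat r φ := by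
  induction l with
  | nil => simp [bigOr, Sat, Form.eval]
  | cons a t ih => simp only [bigOr, List.foldr_cons] at *; simp [sat_or, ih]

lemma sat_chi (r : Fin 6) (B : Finset (Fin 6)) : Sat r (chi B) ↔ r ∈ B := by
  rw [chi, sat_bigOr]
  simp [Sat, Form.eval]

lemma Proves.of_bigAnd {A : Set Form} {l : List Form} (h : Proves A (bigAnd l)) {φ : Form}
    (hφ : φ ∈ l) : Proves A φ :=
  fun r hr => (sat_bigAnd r l).mp (h r hr) φ hφ

lemma Proves.kSet_erasemax_KA {A : Set Form} (h : Proves A (sigmaA A)) :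
    KSet A (erasemax (KA A)) := by
  have hK : Proves A ((iver (KA A ⊆ KA A)).imp (chi (erasemax (KA A)))) :=
    h.of_bigAnd (List.mem_map_of_mem (Finset.mem_toList.mpr (Finset.mem_univ _)))
  rw [iver, if_pos subset_rfl] at hK
  exact fun r hr => (sat_imp_top r _).mp (hK r hr)

lemma KA_subset_of_kSet {A : Set Form} {K : Finset (Fin 6)} (hK : KSet A K) : KA A ⊆ K :=
  fun _ hr => (Finset.mem_filter.mp hr).2 K hK

lemma mem_KA_of_sat {A : Set Form} {r : Fin 6} (hr : ∀ ψ ∈ A, Sat r ψ) : r ∈ KA A :=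
  Finset.mem_filter.mpr ⟨Finset.mem_univ r, fun K hK => (sat_chi r K).mp (hK r hr)⟩

lemma inconsistent_of_KA_eq_empty {A : Set Form} (h : KA A = ∅) : Inconsistent A :=
  fun _ r hr => absurd (mem_KA_of_sat hr) (h ▸ Finset.notMem_empty r)

lemma eq_empty_of_subset_erasemax {K : Finset (Fin 6)} (h : K ⊆ erasemax K) : K = ∅ := by
  by_contra hne
  obtain ⟨m, hm⟩ := Finset.max_of_nonempty (Finset.nonempty_iff_ne_empty.mpr hne)
  have hmK : m ∈ erasemax K := h (Finset.mem_of_max hm)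
  rw [erasemax, maxD, hm] at hmK
  exact Finset.notMem_erase m K hmK

theorem stmt_8_general (A : Set Form) (h2 : Proves A (sigmaA A)) :
    Inconsistent A :=
  inconsistent_of_KA_eq_empty
    (eq_empty_of_subset_erasemax (KA_subset_of_kSet h2.kSet_erasemax_KA))

/-- If `A` proves both `⟨T ∈ D⟩` and the surprise formula `σ^A`, then `A` is
inconsistent. -/
theorem stmt_8 (A : Set Form) (hA : Ax1 ∈ A)
    (h1 : Proves A (chi DaysF)) (h2 : Proves A (sigmaA A)) :
    Inconsistent A :=
  stmt_8_general A h2
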